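/- Under the assumptions and constructions of the first equivalent form (condition Σ_r ≥ (m−1)‖r_k‖₁ + s for all k, extended marginals r̄_k^{(1)}, extended cost C̄^{(1)} with 0 = A_1 < A_2 < … < A_m), every minimizer X̄* of ⟨C̄^{(1)}, ·⟩ over Π(r̄_1^{(1)},…,r̄_m^{(1)}) is supported on the zeroth and first layers: X̄*_v = 0 for every index v ∉ T_∅ ∪ (∪_{j=1}^m T_{{j}}). -/

import Mathlib

/-!
Suppose a minimizer `X̄` charges an index `v` with `p ≥ 2` coordinates equal to `n+1`.
Summing the marginals `r̄_k^{(1)}` gives `∑_u (1 - nLast u) X̄_u = s ≥ 0`, so `X̄` also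
charges some `u ∈ T_∅`. Swapping a coordinate `k` with `v_k = n+1` between `v` and `u` moves
mass from layers `p` and `0` to layers `p - 1` and `1`, which changes the cost by
`A_{p-1} + A_1 - A_p - C_u < 0`, contradicting minimality.
-/

open Finset

noncomputable section

namespace MPOT

/-- The `k`-th marginal of a tensor indexed by `[n]^m` (functions `Fin m → Fin n`). -/
def marg {m n : ℕ} (X : (Fin m → Fin n) → ℝ) (k : Fin m) (j : Fin n) : ℝ :=
  ∑ v : Fin m → Fin n, if v k = j then X v else 0

/-- Entrywise (Frobenius) inner product of tensors. -/
def dot {m n : ℕ} (C X : (Fin m → Fin n) → ℝ) : ℝ :=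
  ∑ v : Fin m → Fin n, C v * X v

/-- The partial transport polytope `Π^s(r_1, …, r_m)`. -/
def PiPartial {m n : ℕ} (r : Fin m → Fin n → ℝ) (s : ℝ) :
    Set ((Fin m → Fin n) → ℝ) :=
  {X | (∀ v, 0 ≤ X v) ∧ (∀ k j, marg X k j ≤ r k j) ∧ ∑ v : Fin m → Fin n, X v = s}

/-- The transport polytope `Π(a_1, …, a_m)` with equality marginal constraints. -/
def PiEq {m n : ℕ} (a : Fin m → Fin n → ℝ) : Set ((Fin m → Fin n) → ℝ) :=
  {X | (∀ v, 0 ≤ X v) ∧ ∀ k j, marg X k j = a k j}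

/-- Embedding of `[n]^m` into `[n+1]^m`. -/
def emb {m n : ℕ} (v : Fin m → Fin n) : Fin m → Fin (n + 1) :=
  fun i => (v i).castSucc

/-- Restriction of a tensor on `[n+1]^m` to the indices in `[n]^m`. -/
def restr {m n : ℕ} (X : (Fin m → Fin (n + 1)) → ℝ) : (Fin m → Fin n) → ℝ :=
  fun v => X (emb v)

/-- The number of coordinates of `u` equal to `n+1` (i.e. `Fin.last n`); `u ∈ T_S`
with `|S| = nLast u`. -/
def nLast {m n : ℕ} (u : Fin m → Fin (n + 1)) : ℕ :=
  (univ.filter fun ℓ => u ℓ = Fin.last n).card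

/-- Extended cost tensor: the original cost on `T_∅ = [n]^m`, and value `A i` on the
`i`-th layer `∪_{|S| = i} T_S`. -/
def extCost {m n : ℕ} (C : (Fin m → Fin n) → ℝ) (A : ℕ → ℝ) :
    (Fin m → Fin (n + 1)) → ℝ :=
  fun u =>
    if h : ∀ i, u i ≠ Fin.last n then C fun i => (u i).castPred (h i)
    else A (nLast u)

/-- Total mass of `X` on the sublayer `T_S`. -/
def layerSum {m n : ℕ} (X : (Fin m → Fin (n + 1)) → ℝ) (S : Finset (Fin m)) : ℝ :=
  ∑ u : Fin m → Fin (n + 1), if ∀ ℓ, (u ℓ = Fin.last n ↔ ℓ ∈ S) then X u else 0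

/-- First-form extended marginals `r̄_k^{(1)} = [r_k, Σ_r/(m−1) − ‖r_k‖₁ − s/(m−1)]`. -/
def extMarg1 {m n : ℕ} (r : Fin m → Fin n → ℝ) (s : ℝ) : Fin m → Fin (n + 1) → ℝ :=
  fun k => Fin.snoc (r k)
    ((∑ i, ∑ j, r i j) / ((m : ℝ) - 1) - (∑ j, r k j) - s / ((m : ℝ) - 1))

/-- Second-form extended marginals `r̄_k^{(2)} = [r_k, Σ_{i≠k} ‖r_i‖₁ − (m−1)s]`. -/
def extMarg2 {m n : ℕ} (r : Fin m → Fin n → ℝ) (s : ℝ) : Fin m → Fin (n + 1) → ℝ :=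
  fun k => Fin.snoc (r k) ((∑ i ∈ univ.erase k, ∑ j, r i j) - ((m : ℝ) - 1) * s)

end MPOT

open MPOT

open Function

namespace MPOT

section

variable {m n : ℕ}

lemma dot_eq_dotProduct (C X : (Fin m → Fin n) → ℝ) : dot C X = C ⬝ᵥ X := rfl

lemma marg_eq_dotProduct (X : (Fin m → Fin n) → ℝ) (k : Fin m) (j : Fin n) :
    marg X k j = (fun v => if v k = j then 1 else 0) ⬝ᵥ X := by
  simp only [marg, dotProduct, ite_mul, one_mul, zero_mul]

def exchange (v u : Fin m → Fin n) (k : Fin m) : (Fin m → Fin n) → ℝ :=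
  Pi.single (update v k (u k)) 1 + Pi.single (update u k (v k)) 1 - Pi.single v 1 -
    Pi.single u 1

lemma dotProduct_exchange (c : (Fin m → Fin n) → ℝ) (v u : Fin m → Fin n) (k : Fin m) :
    c ⬝ᵥ exchange v u k = c (update v k (u k)) + c (update u k (v k)) - c v - c u := by
  simp only [exchange, dotProduct_add, dotProduct_sub, dotProduct_single, mul_one]

lemma marg_exchange (v u : Fin m → Fin n) (k i : Fin m) (j : Fin n) :
    marg (exchange v u k) i j = 0 := by
  rw [marg_eq_dotProduct, dotProduct_exchange]
  rcases eq_or_ne i k with rfl | hik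
  · simp only [update_self]
    ring
  · simp only [update_of_ne hik]
    ring

lemma exchange_apply_ge (v u : Fin m → Fin n) (k : Fin m) (w : Fin m → Fin n) :
    -((if w = v then 1 else 0) + (if w = u then 1 else 0)) ≤ exchange v u k w := by
  simp only [exchange, Pi.add_apply, Pi.sub_apply, Pi.single_apply]
  split_ifs <;> linarith

theorem cost_add_le_cost_exchange {a : Fin m → Fin n → ℝ} {C X : (Fin m → Fin n) → ℝ}
    (hX : X ∈ PiEq a) (hopt : ∀ Y ∈ PiEq a, dot C X ≤ dot C Y)
    {v u : Fin m → Fin n} (hv : 0 < X v) (hu : 0 < X u) (k : Fin m) :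
    C v + C u ≤ C (update v k (u k)) + C (update u k (v k)) := by
  by_contra! hlt
  have hvu : v ≠ u := by
    rintro rfl
    simp only [update_eq_self] at hlt
    exact lt_irrefl _ hlt
  set ε := min (X v) (X u)
  have hε : 0 < ε := lt_min hv hu
  have hY : X + ε • exchange v u k ∈ PiEq a := by
    refine ⟨fun w => ?_, fun i j => ?_⟩
    · have hsingle : ε * ((if w = v then 1 else 0) + (if w = u then 1 else 0)) ≤ X w := by
        split_ifs with hwv hwu hwu
        · exact absurd (hwv.symm.trans hwu) hvu
        · subst hwv; linarith [min_le_left (X w) (X u)]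
        · subst hwu; linarith [min_le_right (X v) (X w)]
        · linarith [hX.1 w]
      have := mul_le_mul_of_nonneg_left (exchange_apply_ge v u k w) hε.le
      simp only [Pi.add_apply, Pi.smul_apply, smul_eq_mul]
      linarith
    · rw [marg_eq_dotProduct, dotProduct_add, dotProduct_smul, ← marg_eq_dotProduct,
        ← marg_eq_dotProduct, marg_exchange, smul_zero, add_zero]
      exact hX.2 i j
  have hcost : dot C (X + ε • exchange v u k) < dot C X := by
    rw [dot_eq_dotProduct, dot_eq_dotProduct, dotProduct_add, dotProduct_smul,
      dotProduct_exchange, smul_eq_mul]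
    linarith [mul_neg_of_pos_of_neg hε (sub_neg.2 hlt)]
  exact (hopt _ hY).not_gt hcost

lemma nLast_eq_zero {u : Fin m → Fin (n + 1)} : nLast u = 0 ↔ ∀ i, u i ≠ Fin.last n := by
  simp [nLast, filter_eq_empty_iff]

lemma nLast_le (u : Fin m → Fin (n + 1)) : nLast u ≤ m := by
  simpa [nLast] using card_filter_le (univ : Finset (Fin m)) fun ℓ => u ℓ = Fin.last n

lemma nLast_update_last {u : Fin m → Fin (n + 1)} {k : Fin m} (hk : u k ≠ Fin.last n) :
    nLast (update u k (Fin.last n)) = nLast u + 1 := by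
  have : (univ.filter fun ℓ => update u k (Fin.last n) ℓ = Fin.last n) =
      insert k (univ.filter fun ℓ => u ℓ = Fin.last n) := by
    ext ℓ
    rcases eq_or_ne ℓ k with rfl | hℓ <;> simp [update_of_ne, *]
  rw [nLast, this, card_insert_of_notMem (by simpa using hk)]
  rfl

lemma nLast_update_of_eq_last {u : Fin m → Fin (n + 1)} {k : Fin m} {x : Fin (n + 1)}
    (hk : u k = Fin.last n) (hx : x ≠ Fin.last n) :
    nLast (update u k x) = nLast u - 1 := by
  have := nLast_update_last (u := update u k x) (k := k) (by simpa using hx)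
  rw [update_idem, ← hk, update_eq_self] at this
  omega

lemma extCost_of_nLast_ne_zero (C : (Fin m → Fin n) → ℝ) (A : ℕ → ℝ)
    {u : Fin m → Fin (n + 1)} (hu : nLast u ≠ 0) : extCost C A u = A (nLast u) :=
  dif_neg (mt nLast_eq_zero.2 hu)

lemma extCost_nonneg_of_nLast_eq_zero {C : (Fin m → Fin n) → ℝ} (hC : ∀ v, 0 ≤ C v)
    (A : ℕ → ℝ) {u : Fin m → Fin (n + 1)} (hu : nLast u = 0) : 0 ≤ extCost C A u := by
  rw [extCost, dif_pos (nLast_eq_zero.1 hu)]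
  exact hC _

lemma sum_marg (X : (Fin m → Fin n) → ℝ) (k : Fin m) : ∑ j, marg X k j = ∑ v, X v := by
  simp only [marg]
  rw [sum_comm]
  simp

lemma sum_marg_last (X : (Fin m → Fin (n + 1)) → ℝ) :
    ∑ k, marg X k (Fin.last n) = ∑ u, (nLast u : ℝ) * X u := by
  simp only [marg, nLast]
  rw [sum_comm]
  refine sum_congr rfl fun u _ => ?_
  rw [card_filter, Nat.cast_sum, sum_mul]
  refine sum_congr rfl fun k _ => ?_
  split_ifs <;> simp

/-- The total mass is `(Σ_r - s) / (m - 1)` and the mass weighted by `nLast` is the sum of the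
last marginal entries, `(Σ_r - m s) / (m - 1)`. -/
lemma sum_one_sub_nLast_mul_of_mem_piEq_extMarg1 (hm : 2 ≤ m) {r : Fin m → Fin n → ℝ}
    {s : ℝ} {X : (Fin m → Fin (n + 1)) → ℝ} (hX : X ∈ PiEq (extMarg1 r s)) :
    ∑ u, (1 - (nLast u : ℝ)) * X u = s := by
  have hm1 : (m : ℝ) - 1 ≠ 0 := by
    have : (2 : ℝ) ≤ m := by exact_mod_cast hm
    linarith
  let k₀ : Fin m := ⟨0, by omega⟩
  simp only [sub_mul, one_mul, sum_sub_distrib]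
  rw [← sum_marg X k₀, ← sum_marg_last, Fin.sum_univ_castSucc]
  simp only [hX.2, extMarg1, Fin.snoc_castSucc, Fin.snoc_last, sum_sub_distrib, sum_const,
    card_univ, Fintype.card_fin, nsmul_eq_mul]
  field_simp
  ring

end

lemma exists_eq_zero_pos_of_sum_one_sub_mul_nonneg {ι : Type*} [Fintype ι] {N : ι → ℕ}
    {X : ι → ℝ} (hX : ∀ i, 0 ≤ X i) (hsum : 0 ≤ ∑ i, (1 - (N i : ℝ)) * X i) {v : ι}
    (hv : 2 ≤ N v) (hXv : 0 < X v) : ∃ u, N u = 0 ∧ 0 < X u := by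
  by_contra! h
  have hterm : ∀ i, (1 - (N i : ℝ)) * X i ≤ 0 := fun i => by
    rcases Nat.eq_zero_or_pos (N i) with hi | hi
    · rw [hi, Nat.cast_zero]
      linarith [h i hi, hX i]
    · have : (1 : ℝ) ≤ N i := by exact_mod_cast hi
      nlinarith [hX i]
  have hv' : (1 - (N v : ℝ)) * X v < 0 := by
    have : (2 : ℝ) ≤ N v := by exact_mod_cast hv
    nlinarith
  have := sum_lt_sum (fun i _ => hterm i) ⟨v, mem_univ v, hv'⟩
  simp only [sum_const_zero] at this
  linarith

end MPOT

theorem mpot_first_form_support_general {m n : ℕ}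
    (C : (Fin m → Fin n) → ℝ) (hC : ∀ v, 0 ≤ C v)
    (r : Fin m → Fin n → ℝ)
    (s : ℝ) (hs0 : 0 ≤ s)
    (A : ℕ → ℝ) (hA1 : A 1 = 0) (hA : ∀ i, 1 ≤ i → i < m → A i < A (i + 1))
    (Xb : (Fin m → Fin (n + 1)) → ℝ) (hmem : Xb ∈ PiEq (extMarg1 r s))
    (hopt : ∀ Y ∈ PiEq (extMarg1 r s), dot (extCost C A) Xb ≤ dot (extCost C A) Y) :
    ∀ v : Fin m → Fin (n + 1), 2 ≤ nLast v → Xb v = 0 := by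
  intro v hv
  by_contra hne
  have hXv : 0 < Xb v := (hmem.1 v).lt_of_ne' hne
  obtain ⟨u, hu, hXu⟩ := exists_eq_zero_pos_of_sum_one_sub_mul_nonneg hmem.1
    ((sum_one_sub_nLast_mul_of_mem_piEq_extMarg1 (hv.trans (nLast_le v)) hmem).symm ▸ hs0)
    hv hXv
  obtain ⟨k, hk⟩ : ∃ k, v k = Fin.last n := by
    by_contra! h
    have := nLast_eq_zero.2 h
    omega
  have hexch := cost_add_le_cost_exchange hmem hopt hXv hXu k
  have huk : u k ≠ Fin.last n := nLast_eq_zero.1 hu k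
  rw [hk, extCost_of_nLast_ne_zero C A (u := v) (by omega),
    extCost_of_nLast_ne_zero C A (u := update v k (u k))
      (by rw [nLast_update_of_eq_last hk huk]; omega),
    extCost_of_nLast_ne_zero C A (u := update u k (Fin.last n))
      (by rw [nLast_update_last huk]; omega),
    nLast_update_of_eq_last hk huk, nLast_update_last huk, hu, hA1] at hexch
  have hstep := hA (nLast v - 1) (by omega) (by have := nLast_le v; omega)
  rw [Nat.sub_add_cancel (by omega)] at hstep
  linarith [extCost_nonneg_of_nLast_eq_zero hC A hu]

/-- Step 2 of the proof of Theorem 3.1: under the assumptions of the first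
equivalent form, every minimizer of `⟨C̄^{(1)}, ·⟩` over `Π(r̄_1^{(1)}, …, r̄_m^{(1)})`
is supported on the zeroth and first layers: entries at indices having at least two
coordinates equal to `n+1` vanish. -/
theorem mpot_first_form_support {m n : ℕ} (hm : 2 ≤ m) (hn : 1 ≤ n)
    (C : (Fin m → Fin n) → ℝ) (hC : ∀ v, 0 ≤ C v)
    (r : Fin m → Fin n → ℝ) (hr : ∀ k j, 0 ≤ r k j)
    (s : ℝ) (hs0 : 0 ≤ s) (hs : ∀ k, s ≤ ∑ j, r k j)
    (hcond : ∀ k, ((m : ℝ) - 1) * (∑ j, r k j) + s ≤ ∑ i, ∑ j, r i j)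
    (A : ℕ → ℝ) (hA1 : A 1 = 0) (hA : ∀ i, 1 ≤ i → i < m → A i < A (i + 1))
    (Xb : (Fin m → Fin (n + 1)) → ℝ) (hmem : Xb ∈ PiEq (extMarg1 r s))
    (hopt : ∀ Y ∈ PiEq (extMarg1 r s), dot (extCost C A) Xb ≤ dot (extCost C A) Y) :
    ∀ v : Fin m → Fin (n + 1), 2 ≤ nLast v → Xb v = 0 :=
  mpot_first_form_support_general C hC r s hs0 A hA1 hA Xb hmem hopt
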